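/- Let V : EuclideanSpace ℝ (Fin d) → ℝ be differentiable, let ε > 0, let L ≥ 2, and fix endpoints q⁰ and q^L. Define the discrete action S(q¹, …, q^{L-1}) = ε·∑_{i=0}^{L-1} ( (1/2)·‖(q^{i+1} - qⁱ)/ε‖² - (V(q^{i+1}) + V(qⁱ))/2 ). If the interior path (q¹, …, q^{L-1}) is a local minimum of S (with q⁰ and q^L held fixed), then the leapfrog position recurrence holds at every interior index: q^{i+1} = 2·qⁱ - q^{i-1} - ε² • ∇V(qⁱ) for all i = 1, …, L-1, where ∇V denotes the gradient of V. -/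

import Mathlib

/-- The discrete action of a path `Q` (only indices `0, …, L` are used):
`S(Q) = ε·∑_{i=0}^{L-1} ( (1/2)·‖(Q^{i+1} - Qⁱ)/ε‖² - (V(Q^{i+1}) + V(Qⁱ))/2 )`. -/
noncomputable def discreteAction {d : ℕ} (V : EuclideanSpace ℝ (Fin d) → ℝ) (ε : ℝ) (L : ℕ)
    (Q : ℕ → EuclideanSpace ℝ (Fin d)) : ℝ :=
  ε * ∑ i ∈ Finset.range L,
    ((1 / 2) * ‖(ε⁻¹ : ℝ) • (Q (i + 1) - Q i)‖ ^ 2 - (V (Q (i + 1)) + V (Q i)) / 2)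

/-- The full path obtained from interior points `y : Fin (L-1) → E` with fixed endpoints. -/
noncomputable def extendPath {d : ℕ} (L : ℕ) (q0 qL : EuclideanSpace ℝ (Fin d))
    (y : Fin (L - 1) → EuclideanSpace ℝ (Fin d)) : ℕ → EuclideanSpace ℝ (Fin d) :=
  fun i => if h : 1 ≤ i ∧ i ≤ L - 1 then y ⟨i - 1, by omega⟩
    else if i = 0 then q0 else qL

/-!
Fix every point of the path except `qⁱ` and vary `qⁱ = x`. Only the two steps adjacent to `qⁱ`
depend on `x`, so up to an additive constant the action is `ε⁻¹` times
`(‖x - qⁱ⁻¹‖² + ‖x - qⁱ⁺¹‖²) / 2 - ε² V x`. This function has a local minimum at `qⁱ`, and its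
gradient there, `2 qⁱ - qⁱ⁻¹ - qⁱ⁺¹ - ε² ∇V(qⁱ)`, must vanish.
-/

open Finset InnerProductSpace

section LocalAction

variable {E : Type*} [NormedAddCommGroup E] [InnerProductSpace ℝ E] [CompleteSpace E]

theorem IsLocalMin.hasGradientAt_eq_zero {f : E → ℝ} {a g : E} (h : IsLocalMin f a)
    (hf : HasGradientAt f g a) : g = 0 := by
  rw [hasGradientAt_iff_hasFDerivAt] at hf
  simpa using h.hasFDerivAt_eq_zero hf

noncomputable def localAction (V : E → ℝ) (c : ℝ) (a b : E) (x : E) : ℝ :=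
  2⁻¹ * (‖x - a‖ ^ 2 + ‖x - b‖ ^ 2) - c * V x

theorem hasGradientAt_localAction {V : E → ℝ} {x : E} (hV : DifferentiableAt ℝ V x)
    (c : ℝ) (a b : E) :
    HasGradientAt (localAction V c a b) ((2 : ℝ) • x - a - b - c • gradient V x) x := by
  have hsub : ∀ p : E, HasFDerivAt (fun x : E => x - p) (ContinuousLinearMap.id ℝ E) x :=
    fun p => (hasFDerivAt_id x).sub_const p
  rw [hasGradientAt_iff_hasFDerivAt]
  refine ((((hsub a).norm_sq.fun_add (hsub b).norm_sq).const_mul 2⁻¹).fun_sub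
    (hV.hasGradientAt.hasFDerivAt.const_mul c)).congr_fderiv ?_
  ext v
  simp [two_smul]
  ring

end LocalAction

section DiscreteAction

variable {d : ℕ}

theorem discreteAction_congr {V : EuclideanSpace ℝ (Fin d) → ℝ} {ε : ℝ} {L : ℕ}
    {Q Q' : ℕ → EuclideanSpace ℝ (Fin d)} (h : ∀ k ≤ L, Q k = Q' k) :
    discreteAction V ε L Q = discreteAction V ε L Q' := by
  unfold discreteAction
  congr 1
  refine sum_congr rfl fun k hk => ?_
  rw [mem_range] at hk
  rw [h k hk.le, h (k + 1) hk]

theorem exists_discreteAction_update_eq (V : EuclideanSpace ℝ (Fin d) → ℝ) {ε : ℝ} (hε : ε ≠ 0)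
    {L : ℕ} (Q : ℕ → EuclideanSpace ℝ (Fin d)) {i : ℕ} (hi : 1 ≤ i) (hiL : i < L) :
    ∃ C, ∀ x, discreteAction V ε L (Function.update Q i x) =
      ε⁻¹ * localAction V (ε ^ 2) (Q (i - 1)) (Q (i + 1)) x + C := by
  set step : (ℕ → EuclideanSpace ℝ (Fin d)) → ℕ → ℝ := fun P k =>
    (1 / 2) * ‖ε⁻¹ • (P (k + 1) - P k)‖ ^ 2 - (V (P (k + 1)) + V (P k)) / 2
  have hsplit : ∀ P, ∑ k ∈ range L, step P k =
      step P (i - 1) + step P i + ∑ k ∈ ((range L).erase (i - 1)).erase i, step P k := by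
    intro P
    rw [← add_sum_erase (range L) (step P) (a := i - 1) (mem_range.2 (by omega)), add_assoc,
      add_sum_erase _ (step P) (mem_erase.2 ⟨by omega, mem_range.2 hiL⟩)]
  refine ⟨ε * ∑ k ∈ ((range L).erase (i - 1)).erase i, step Q k
    - ε * (V (Q (i - 1)) + V (Q (i + 1))) / 2, fun x => ?_⟩
  have hrest : ∑ k ∈ ((range L).erase (i - 1)).erase i, step (Function.update Q i x) k =
      ∑ k ∈ ((range L).erase (i - 1)).erase i, step Q k := by
    refine sum_congr rfl fun k hk => ?_
    obtain ⟨hki, hk1, -⟩ : k ≠ i ∧ k ≠ i - 1 ∧ _ := by simpa using hk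
    simp only [step, Function.update_of_ne hki, Function.update_of_ne (by omega : k + 1 ≠ i)]
  have hprev : Function.update Q i x (i - 1) = Q (i - 1) := Function.update_of_ne (by omega) _ _
  have hnext : Function.update Q i x (i + 1) = Q (i + 1) := Function.update_of_ne (by omega) _ _
  unfold discreteAction localAction
  rw [hsplit, hrest]
  generalize ∑ k ∈ ((range L).erase (i - 1)).erase i, step Q k = R
  simp only [step, Nat.sub_add_cancel hi, Function.update_self, hprev, hnext, norm_smul,
    norm_sub_rev (Q (i + 1)) x, norm_inv, Real.norm_eq_abs, mul_pow, inv_pow, sq_abs]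
  field_simp
  ring

theorem extendPath_update (L : ℕ) (q0 qL : EuclideanSpace ℝ (Fin d))
    (y : Fin (L - 1) → EuclideanSpace ℝ (Fin d)) (j : Fin (L - 1)) (x : EuclideanSpace ℝ (Fin d)) :
    extendPath L q0 qL (Function.update y j x) =
      Function.update (extendPath L q0 qL y) (j.1 + 1) x := by
  funext k
  by_cases hk : k = j.1 + 1
  · subst hk
    simp [extendPath, j.2]
  · rw [Function.update_of_ne hk]
    unfold extendPath
    split_ifs with hin
    · exact Function.update_of_ne (fun h => hk (by simp only [Fin.ext_iff] at h; omega)) _ _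
    all_goals rfl

theorem extendPath_apply_of_le (L : ℕ) (q : ℕ → EuclideanSpace ℝ (Fin d)) {k : ℕ} (hk : k ≤ L) :
    extendPath L (q 0) (q L) (fun j => q (j.1 + 1)) k = q k := by
  unfold extendPath
  split_ifs with hin hk0
  · exact congrArg q (Nat.sub_add_cancel hin.1)
  · rw [hk0]
  · congr 1
    omega

theorem IsLocalMin.discreteAction_update {V : EuclideanSpace ℝ (Fin d) → ℝ} {ε : ℝ} {L : ℕ}
    {q : ℕ → EuclideanSpace ℝ (Fin d)}
    (hmin : IsLocalMin (fun y => discreteAction V ε L (extendPath L (q 0) (q L) y))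
      (fun j : Fin (L - 1) => q (j.1 + 1)))
    {i : ℕ} (hi : 1 ≤ i) (hiL : i ≤ L - 1) :
    IsLocalMin (fun x => discreteAction V ε L (Function.update q i x)) (q i) := by
  set j : Fin (L - 1) := ⟨i - 1, by omega⟩
  have hji : j.1 + 1 = i := Nat.sub_add_cancel hi
  have hupdate : Function.update (fun j : Fin (L - 1) => q (j.1 + 1)) j (q i) =
      fun j => q (j.1 + 1) := by
    rw [Function.update_eq_self_iff, hji]
  have hcomp := IsLocalMin.comp_continuous (hupdate ▸ hmin)
    (continuous_const.update j continuous_id).continuousAt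
  refine hcomp.congr (Filter.Eventually.of_forall fun x => discreteAction_congr fun k hk => ?_)
  simp only [extendPath_update, hji]
  by_cases hki : k = i
  · simp [hki]
  · simp [Function.update_of_ne hki, extendPath_apply_of_le L q hk]

end DiscreteAction

theorem stmt_10_general (d : ℕ) (V : EuclideanSpace ℝ (Fin d) → ℝ) (hV : Differentiable ℝ V)
    (ε : ℝ) (hε : 0 < ε) (L : ℕ) (q : ℕ → EuclideanSpace ℝ (Fin d))
    (hmin : IsLocalMin
      (fun y : Fin (L - 1) → EuclideanSpace ℝ (Fin d) =>
        discreteAction V ε L (extendPath L (q 0) (q L) y))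
      (fun j => q (j.1 + 1))) :
    ∀ i : ℕ, 1 ≤ i → i ≤ L - 1 →
      q (i + 1) = (2 : ℝ) • q i - q (i - 1) - ε ^ 2 • gradient V (q i) := by
  intro i hi hiL
  obtain ⟨C, hC⟩ := exists_discreteAction_update_eq V hε.ne' q hi (by omega : i < L)
  have hloc : IsLocalMin (localAction V (ε ^ 2) (q (i - 1)) (q (i + 1))) (q i) := by
    filter_upwards [hmin.discreteAction_update hi hiL] with x hx
    simp only [hC] at hx
    exact le_of_mul_le_mul_left (by linarith) (inv_pos.2 hε)
  have hcrit := hloc.hasGradientAt_eq_zero (hasGradientAt_localAction (hV _) _ _ _)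
  rw [sub_right_comm, sub_eq_zero] at hcrit
  exact hcrit.symm

theorem stmt_10 (d : ℕ) (V : EuclideanSpace ℝ (Fin d) → ℝ) (hV : Differentiable ℝ V)
    (ε : ℝ) (hε : 0 < ε) (L : ℕ) (hL : 2 ≤ L) (q : ℕ → EuclideanSpace ℝ (Fin d))
    (hmin : IsLocalMin
      (fun y : Fin (L - 1) → EuclideanSpace ℝ (Fin d) =>
        discreteAction V ε L (extendPath L (q 0) (q L) y))
      (fun j => q (j.1 + 1))) :
    ∀ i : ℕ, 1 ≤ i → i ≤ L - 1 →
      q (i + 1) = (2 : ℝ) • q i - q (i - 1) - ε ^ 2 • gradient V (q i) :=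
  stmt_10_general d V hV ε hε L q hmin
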